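/- Let ψ : ℝ^{2n} → ℝ^{2n} be a symplectic diffeomorphism, let P be the orthogonal projector onto the complex subspace ℝ^{2k} corresponding to the coordinates p_1,q_1,…,p_k,q_k, and let x ∈ ∂B be a point of the unit sphere at which the map z ↦ P ψ(z), restricted to ∂B, is singular (i.e. its differential at x, as a map from the tangent space T_x ∂B to ℝ^{2k}, is not surjective). Then (I − P) Dψ(x)[J x] = 0, where J is the standard complex structure on ℝ^{2n}. -/

import Mathlib

/-!
Lemma 6 (i).  We model `ℝ^{2n}` as `ℂ^n`, with the complex structure `J` given by
multiplication by `Complex.I`.  `P` is the orthogonal projector onto the complex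
subspace `ℝ^{2k} ⊂ ℝ^{2n}` spanned by the first `k` complex coordinates, given
concretely by setting the remaining coordinates to zero; membership of `w` in
`ℝ^{2k}` is expressed by the vanishing of the coordinates `w j`, `j ≥ k`.  The
tangent space of the unit sphere at `x` is `{u : ⟪x,u⟫_ℝ = 0}`, and singularity of
the restricted map `z ↦ P ψ(z)` at `x` means that its differential, as a map
`T_x ∂B → ℝ^{2k}`, is not surjective.  A symplectic diffeomorphism is a smooth
bijection whose differential preserves the symplectic form everywhere.
-/

open MeasureTheory Metric

noncomputable section

abbrev E2 (n : ℕ) := EuclideanSpace ℂ (Fin n)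

/-- The standard symplectic form on `ℝ^{2n} = ℂ^n`. -/
def symp (n : ℕ) (u v : E2 n) : ℝ := (inner ℂ u v : ℂ).im

/-- The Euclidean (real) inner product on `ℝ^{2n} = ℂ^n`. -/
def rinner (n : ℕ) (u v : E2 n) : ℝ := (inner ℂ u v : ℂ).re

/-- The orthogonal projector onto the subspace `ℝ^{2k}` spanned by the first `k`
complex coordinates. -/
def projC (n k : ℕ) (x : E2 n) : E2 n :=
  (WithLp.toLp 2 (fun j => if j.1 < k then x j else 0) : E2 n)

/-- **Lemma 6 (i).**  If `x ∈ ∂B` is a singular point of `∂B → ℝ^{2k}`,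
`z ↦ P ψ(z)`, then `(I - P) Dψ(x)[Jx] = 0`. -/
theorem singular_point_condition (n k : ℕ) (hk : 1 ≤ k) (hkn : k ≤ n)
    (ψ : E2 n → E2 n)
    (hψsmooth : ContDiff ℝ (⊤ : ℕ∞) ψ)
    (hψbij : Function.Bijective ψ)
    (hψsymp : ∀ x u v, symp n (fderiv ℝ ψ x u) (fderiv ℝ ψ x v) = symp n u v)
    (x : E2 n) (hx : x ∈ sphere (0 : E2 n) 1)
    (hsing : ¬ ∀ w : E2 n, (∀ j : Fin n, k ≤ j.1 → w j = 0) →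
      ∃ u : E2 n, rinner n x u = 0 ∧ projC n k (fderiv ℝ ψ x u) = w) :
    fderiv ℝ ψ x (Complex.I • x) = projC n k (fderiv ℝ ψ x (Complex.I • x)) := by
  by_contra hne
  apply hsing
  set A : E2 n →L[ℝ] E2 n := fderiv ℝ ψ x with hA
  -- injectivity of A
  have key : ∀ u : E2 n, A u = 0 → u = 0 := by
    intro u hu
    have h1 := hψsymp x u (Complex.I • u)
    rw [← hA] at h1
    rw [hu] at h1
    have hL : symp n (0 : E2 n) (A (Complex.I • u)) = 0 := by
      simp [symp]
    have hR : symp n u (Complex.I • u) = ‖u‖^2 := by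
      simp [symp, inner_smul_right, inner_self_eq_norm_sq_to_K, Complex.mul_im]
      norm_cast
    rw [hL, hR] at h1
    have : ‖u‖ = 0 := by nlinarith [norm_nonneg u]
    simpa using this
  have hinj : Function.Injective A := by
    intro a b hab
    have h0 : A (a - b) = 0 := by rw [map_sub, hab, sub_self]
    exact sub_eq_zero.mp (key _ h0)
  have hsurj : Function.Surjective A :=
    LinearMap.surjective_of_injective (f := (A : E2 n →ₗ[ℝ] E2 n)) hinj
  set y : E2 n := A (Complex.I • x) with hy
  set z : E2 n := (WithLp.toLp 2 (fun j => if j.1 < k then 0 else y j) : E2 n) with hz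
  -- z ≠ 0
  have hzne : z ≠ 0 := by
    intro h0
    apply hne
    ext j
    by_cases hj : j.1 < k
    · simp [projC, hj]
    · have : z j = 0 := by rw [h0]; rfl
      rw [hz] at this
      simp only [PiLp.toLp_apply, hj, if_false] at this
      simp [projC, hj, this]
  -- ⟨y, z⟩ = ‖z‖²
  have hyz : (inner ℂ y z : ℂ) = (‖z‖:ℂ)^2 := by
    have h1 : (inner ℂ y z : ℂ) = (inner ℂ z z : ℂ) := by
      simp only [PiLp.inner_apply, RCLike.inner_apply]
      refine Finset.sum_congr rfl fun j _ => ?_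
      by_cases hj : j.1 < k
      · have : z j = 0 := by rw [hz]; simp [hj]
        rw [this]; ring
      · have : z j = y j := by rw [hz]; simp [hj]
        rw [this]
    rw [h1, inner_self_eq_norm_sq_to_K]
    norm_cast
  obtain ⟨c, hc⟩ := hsurj (Complex.I • z)
  -- rinner x c = -‖z‖²
  have hxc : rinner n x c = -‖z‖^2 := by
    have h1 : rinner n x c = -symp n (Complex.I • x) c := by
      simp [rinner, symp, inner_smul_left, Complex.mul_im]
    have h2 : symp n (Complex.I • x) c = symp n (A (Complex.I • x)) (A c) :=
      (hψsymp x (Complex.I • x) c).symm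
    rw [h1, h2, hc, ← hy]
    have h3 : symp n y (Complex.I • z) = ‖z‖^2 := by
      simp [symp, inner_smul_right, hyz, Complex.mul_im]
      norm_cast
    rw [h3]
  have hxcne : rinner n x c ≠ 0 := by
    rw [hxc]
    simp only [ne_eq, neg_eq_zero, pow_eq_zero_iff, norm_eq_zero]
    exact fun h => hzne (by simpa using h)
  intro w hw
  obtain ⟨u0, hu0⟩ := hsurj w
  set t : ℝ := rinner n x u0 / rinner n x c with ht
  refine ⟨u0 - t • c, ?_, ?_⟩
  · have hsm : (t • c : E2 n) = (t : ℂ) • c := by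
      rw [← algebraMap_smul ℂ t c]; rfl
    have h1 : (inner ℂ x (u0 - t • c) : ℂ) = inner ℂ x u0 - (t:ℂ) * inner ℂ x c := by
      rw [inner_sub_right, hsm, inner_smul_right]
    have hlin : rinner n x (u0 - t • c) = rinner n x u0 - t * rinner n x c := by
      simp only [rinner, h1, Complex.sub_re, Complex.mul_re, Complex.ofReal_re,
        Complex.ofReal_im]
      ring
    rw [hlin, ht, div_mul_cancel₀ _ hxcne, sub_self]
  · rw [map_sub, A.map_smul, hu0, hc]
    ext j
    by_cases hj : j.1 < k
    · have hzj : z j = 0 := by rw [hz]; simp [hj]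
      simp [projC, hj, PiLp.smul_apply, hzj]
    · simp [projC, hj, hw j (le_of_not_gt hj)]
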